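/- arXiv:2410.08077 — 2 statements merged into one kernel-verified Lean document; each statement's English description precedes it below -/
import Mathlib

section
/- Let H be a linear forest (a graph each of whose connected components is a path). If G is an H-free graph (contains no induced subgraph isomorphic to H) and uv is an edge of G, then the graph G/uv obtained by contracting uv (deleting u and v and adding a new vertex w adjacent to all of (N(u) ∪ N(v)) \ {u,v}) is also H-free. -/
open SimpleGraph

/-- `G` contains no induced subgraph isomorphic to `H`. -/
def SimpleGraph.FreeInduced {α β : Type*} (G : SimpleGraph α) (H : SimpleGraph β) : Prop :=
  IsEmpty (H ↪g G)

/-- The graph obtained from `G` by contracting the edge `uv`: delete `u` and `v` and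
add a new vertex (`none`) adjacent to `(N(u) ∪ N(v)) \ {u, v}`. -/
def SimpleGraph.contract {α : Type*} (G : SimpleGraph α) (u v : α) :
    SimpleGraph (Option {x : α // x ≠ u ∧ x ≠ v}) where
  Adj a b :=
    match a, b with
    | none, none => False
    | none, some x => G.Adj u x.1 ∨ G.Adj v x.1
    | some x, none => G.Adj u x.1 ∨ G.Adj v x.1
    | some x, some y => G.Adj x.1 y.1
  symm := by
    refine ⟨?_⟩
    rintro (_ | x) (_ | y) h
    · exact h
    · exact h
    · exact h
    · exact h.symm
  loopless := by
    refine ⟨?_⟩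
    rintro (_ | x) h
    · exact h
    · exact G.loopless.irrefl _ h

/-- The disjoint union of a path on 5 vertices and `r` isolated vertices. -/
def P5rK1 (r : ℕ) : SimpleGraph (Fin 5 ⊕ Fin r) :=
  pathGraph 5 ⊕g (⊥ : SimpleGraph (Fin r))

/-- `u` and `v` are true twins: adjacent with the same neighbours outside the pair. -/
def SimpleGraph.TrueTwins {α : Type*} (G : SimpleGraph α) (u v : α) : Prop :=
  G.Adj u v ∧ ∀ w, w ≠ u → w ≠ v → (G.Adj u w ↔ G.Adj v w)

/-- The external neighbourhood of a set `S`. -/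
def SimpleGraph.extN {α : Type*} (G : SimpleGraph α) (S : Set α) : Set α :=
  {v | v ∉ S ∧ ∃ u ∈ S, G.Adj u v}

/-- `s` is an independent set of `G`. -/
def SimpleGraph.IsIndep {α : Type*} (G : SimpleGraph α) (s : Set α) : Prop :=
  ∀ ⦃x⦄, x ∈ s → ∀ ⦃y⦄, y ∈ s → ¬ G.Adj x y

/-- `X` and `Y` are anticomplete: disjoint and with no edges between them. -/
def SimpleGraph.Anticomplete {α : Type*} (G : SimpleGraph α) (X Y : Set α) : Prop :=
  Disjoint X Y ∧ ∀ x ∈ X, ∀ y ∈ Y, ¬ G.Adj x y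

/-- The blob graph of a family `𝒞` of (vertex sets of) subgraphs of `G`. -/
def blob {α : Type*} (G : SimpleGraph α) (𝒞 : Set (Set α)) : SimpleGraph 𝒞 where
  Adj C C' := C ≠ C' ∧ ((C.1 ∩ C'.1).Nonempty ∨ ∃ x ∈ C.1, ∃ y ∈ C'.1, G.Adj x y)
  symm := by
    refine ⟨?_⟩
    rintro C C' ⟨hne, h⟩
    refine ⟨hne.symm, ?_⟩
    rcases h with h | ⟨x, hx, y, hy, hxy⟩
    · exact Or.inl (by rwa [Set.inter_comm])
    · exact Or.inr ⟨y, hy, x, hx, hxy.symm⟩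
  loopless := by refine ⟨?_⟩; rintro C ⟨hne, -⟩; exact hne rfl

/-- Linear forest: every connected component is a path. -/
def IsLinearForest {β : Type*} [Fintype β] (H : SimpleGraph β) : Prop :=
  ∀ c : H.ConnectedComponent, ∃ n, Nonempty ((H.induce c.supp) ≃g pathGraph n)

/-!
Let `φ` embed `H` into `G/uv` and let `z` be the vertex sent to the contracted vertex. If all
`H`-neighbours of `z` are seen by `u` (or all by `v`), sending `z` to `u` (or `v`) embeds `H` into
`G`. Otherwise `z` has a neighbour `a` seen only by `v` and a neighbour `b` seen only by `u`, and
since `z` lies on a path component, `b, z, a` are consecutive on it. In `G` the vertices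
`b, u, v, a` then form an induced path, so the component of `z` becomes a path one vertex longer,
which still contains the original path as an induced subgraph; the other components are untouched.
-/

namespace SimpleGraph

variable {α β : Type*} {G : SimpleGraph α} {H : SimpleGraph β}

lemma _root_.Fin.val_succAbove_castSucc {n : ℕ} (j k : Fin n) :
    (j.castSucc.succAbove k : ℕ) = if k.val < j.val then k.val else k.val + 1 := by
  rcases lt_or_ge k j with h | h
  · rw [Fin.succAbove_castSucc_of_lt _ _ h, if_pos (Fin.lt_def.mp h)]; rfl
  · rw [Fin.succAbove_castSucc_of_le _ _ h, if_neg (not_lt.mpr (Fin.le_def.mp h))]; rfl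

def pathGraph.revIso (n : ℕ) : pathGraph n ≃g pathGraph n where
  toEquiv := Fin.revPerm
  map_rel_iff' {k m} := by
    simp only [Fin.revPerm_apply, pathGraph_adj, Fin.val_rev]
    omega

def pathGraph.castSuccEmb (n : ℕ) : pathGraph n ↪g pathGraph (n + 1) where
  toEmbedding := Fin.castSuccEmb
  map_rel_iff' := by simp [pathGraph_adj]

/-- `g` is an induced copy of the path with its edge `ij` deleted, and `v` subdivides that edge. -/
def pathGraphInsertNth {n : ℕ} (g : Fin n → α) (v : α) {i j : Fin n} (hij : i.val + 1 = j.val)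
    (hg : Function.Injective g) (hgv : ∀ k, g k ≠ v)
    (hgadj : ∀ k m, G.Adj (g k) (g m) ↔ (pathGraph n).Adj k m ∧ s(k, m) ≠ s(i, j))
    (hvadj : ∀ k, G.Adj v (g k) ↔ k = i ∨ k = j) : pathGraph (n + 1) ↪g G where
  toFun := Fin.insertNth j.castSucc v g
  inj' := by
    intro x y hxy
    induction x using Fin.succAboveCases j.castSucc <;>
      induction y using Fin.succAboveCases j.castSucc <;>
      simp_all [hg.eq_iff, (hgv _).symm]
  map_rel_iff' {x y} := by
    show G.Adj (Fin.insertNth (α := fun _ => α) j.castSucc v g x)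
      (Fin.insertNth (α := fun _ => α) j.castSucc v g y) ↔ _
    have hval := Fin.val_succAbove_castSucc j
    induction x using Fin.succAboveCases j.castSucc <;>
      induction y using Fin.succAboveCases j.castSucc <;>
      simp only [Fin.insertNth_apply_same, Fin.insertNth_apply_succAbove, hgadj, hvadj,
        G.adj_comm _ v, G.irrefl, (pathGraph _).irrefl, pathGraph_adj, ne_eq, Sym2.eq_iff,
        Fin.ext_iff, hval, Fin.val_castSucc] <;>
      split_ifs <;> omega

theorem exists_iso_pathGraph_of_adj_of_adj {z a b : β}
    (hc : ∃ n, Nonempty (H.induce (H.connectedComponentMk z).supp ≃g pathGraph n))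
    (ha : H.Adj z a) (hb : H.Adj z b) (hab : a ≠ b) :
    ∃ n, ∃ e : H.induce (H.connectedComponentMk z).supp ≃g pathGraph n, ∃ l i j : Fin n,
      l.val + 1 = i.val ∧ i.val + 1 = j.val ∧
      (e.symm l : β) = b ∧ (e.symm i : β) = z ∧ (e.symm j : β) = a := by
  obtain ⟨n, ⟨e⟩⟩ := hc
  have hz : z ∈ (H.connectedComponentMk z).supp := rfl
  have ha' := (H.connectedComponentMk z).mem_supp_of_adj_mem_supp hz ha
  have hb' := (H.connectedComponentMk z).mem_supp_of_adj_mem_supp hz hb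
  have hpa : (pathGraph n).Adj (e ⟨z, hz⟩) (e ⟨a, ha'⟩) := e.map_adj_iff.mpr ha
  have hpb : (pathGraph n).Adj (e ⟨z, hz⟩) (e ⟨b, hb'⟩) := e.map_adj_iff.mpr hb
  have hne : (e ⟨a, ha'⟩ : ℕ) ≠ e ⟨b, hb'⟩ :=
    fun h => hab (congrArg Subtype.val (e.injective (Fin.ext h)))
  rw [pathGraph_adj] at hpa hpb
  by_cases hza : (e ⟨z, hz⟩ : ℕ) + 1 = e ⟨a, ha'⟩
  · exact ⟨n, e, e ⟨b, hb'⟩, e ⟨z, hz⟩, e ⟨a, ha'⟩, by omega, hza, by simp, by simp, by simp⟩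
  · refine ⟨n, e.trans (pathGraph.revIso n), (e ⟨b, hb'⟩).rev, (e ⟨z, hz⟩).rev,
      (e ⟨a, ha'⟩).rev, ?_, ?_, ?_, ?_, ?_⟩ <;>
      simp [pathGraph.revIso, Fin.val_rev] <;> omega

theorem nonempty_embedding_of_induce_compl {s : Set β}
    (hs : ∀ x ∈ s, ∀ y ∉ s, ¬ H.Adj x y) (φ : H.induce s ↪g G) (ψ : H.induce sᶜ ↪g G)
    (hφψ : ∀ x y, φ x ≠ ψ y ∧ ¬ G.Adj (φ x) (ψ y)) : Nonempty (H ↪g G) := by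
  classical
  let f : β → α := fun x => if hx : x ∈ s then φ ⟨x, hx⟩ else ψ ⟨x, hx⟩
  refine ⟨⟨⟨f, fun x y hxy => ?_⟩, fun {x y} => ?_⟩⟩
  · by_cases hx : x ∈ s <;> by_cases hy : y ∈ s <;>
      simp only [f, hx, hy, dite_true, dite_false] at hxy
    · exact congrArg Subtype.val (φ.injective hxy)
    · exact absurd hxy (hφψ _ _).1
    · exact absurd hxy.symm (hφψ _ _).1
    · exact congrArg Subtype.val (ψ.injective hxy)
  · show G.Adj (f x) (f y) ↔ H.Adj x y
    by_cases hx : x ∈ s <;> by_cases hy : y ∈ s <;> simp only [f, hx, hy, dite_true, dite_false]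
    · exact φ.map_adj_iff
    · exact iff_of_false (hφψ _ _).2 (hs x hx y hy)
    · exact iff_of_false (fun h => (hφψ _ _).2 h.symm) (fun h => hs y hy x hx h.symm)
    · exact ψ.map_adj_iff

theorem nonempty_embedding_of_induce_compl_singleton {z : β} (ψ : H.induce {z}ᶜ ↪g G) {t : α}
    (hψt : ∀ w, ψ w ≠ t) (hadj : ∀ w, G.Adj t (ψ w) ↔ H.Adj z w) : Nonempty (H ↪g G) := by
  classical
  let f : β → α := fun x => if hx : x = z then t else ψ ⟨x, hx⟩
  refine ⟨⟨⟨f, fun x y hxy => ?_⟩, fun {x y} => ?_⟩⟩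
  · by_cases hx : x = z <;> by_cases hy : y = z <;>
      simp only [f, hx, hy, dite_true, dite_false] at hxy
    · exact hx.trans hy.symm
    · exact absurd hxy.symm (hψt _)
    · exact absurd hxy (hψt _)
    · exact congrArg Subtype.val (ψ.injective hxy)
  · show G.Adj (f x) (f y) ↔ H.Adj x y
    by_cases hx : x = z <;> by_cases hy : y = z <;> simp only [f, hx, hy, dite_true, dite_false]
    · subst hx hy; exact iff_of_false (G.irrefl) (H.irrefl)
    · subst hx; exact hadj _
    · subst hy; rw [G.adj_comm, H.adj_comm]; exact hadj _
    · exact ψ.map_adj_iff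

namespace Embedding

variable {u v : α} (φ : H ↪g G.contract u v)

def liftContract (w : β) : α := (φ w).elim u Subtype.val

variable {φ}

lemma liftContract_of_eq_none {w : β} (h : φ w = none) : φ.liftContract w = u := by
  simp [liftContract, h]

lemma liftContract_of_eq_some {w : β} {x : {x // x ≠ u ∧ x ≠ v}} (h : φ w = some x) :
    φ.liftContract w = x := by
  simp [liftContract, h]

lemma apply_ne_none_of_ne {z w : β} (hz : φ z = none) (hw : w ≠ z) : φ w ≠ none :=
  fun h => hw (φ.injective (h.trans hz.symm))

lemma liftContract_injective : Function.Injective φ.liftContract := by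
  intro w w' h
  apply φ.injective
  cases hw : φ w with
  | none =>
    cases hw' : φ w' with
    | none => rfl
    | some x' =>
      rw [liftContract_of_eq_none hw, liftContract_of_eq_some hw'] at h
      exact absurd h.symm x'.2.1
  | some x =>
    cases hw' : φ w' with
    | none =>
      rw [liftContract_of_eq_some hw, liftContract_of_eq_none hw'] at h
      exact absurd h x.2.1
    | some x' =>
      rw [liftContract_of_eq_some hw, liftContract_of_eq_some hw'] at h
      rw [Subtype.ext h]

lemma liftContract_ne_right (huv : u ≠ v) (w : β) : φ.liftContract w ≠ v := by
  cases hw : φ w with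
  | none => rwa [liftContract_of_eq_none hw]
  | some x => rw [liftContract_of_eq_some hw]; exact x.2.2

lemma adj_liftContract_iff {w w' : β} (hw : φ w ≠ none) (hw' : φ w' ≠ none) :
    G.Adj (φ.liftContract w) (φ.liftContract w') ↔ H.Adj w w' := by
  obtain ⟨x, hx⟩ := Option.ne_none_iff_exists'.mp hw
  obtain ⟨x', hx'⟩ := Option.ne_none_iff_exists'.mp hw'
  rw [liftContract_of_eq_some hx, liftContract_of_eq_some hx', ← φ.map_adj_iff, hx, hx']
  rfl

lemma adj_iff_adj_liftContract {z w : β} (hz : φ z = none) (hw : φ w ≠ none) :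
    H.Adj z w ↔ G.Adj u (φ.liftContract w) ∨ G.Adj v (φ.liftContract w) := by
  obtain ⟨x, hx⟩ := Option.ne_none_iff_exists'.mp hw
  rw [liftContract_of_eq_some hx, ← φ.map_adj_iff, hz, hx]
  rfl

variable (φ) in
def liftContractInduce (s : Set β) (hs : ∀ w ∈ s, φ w ≠ none) : H.induce s ↪g G where
  toFun w := φ.liftContract w
  inj' _ _ h := Subtype.ext (liftContract_injective h)
  map_rel_iff' {w w'} := adj_liftContract_iff (hs w w.2) (hs w' w'.2)

lemma adj_of_adj_liftContract {w w' : β} (hw' : φ w' ≠ none)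
    (h : G.Adj (φ.liftContract w) (φ.liftContract w')) : H.Adj w w' := by
  by_cases hw : φ w = none
  · rw [liftContract_of_eq_none hw] at h
    exact (adj_iff_adj_liftContract hw hw').mpr (Or.inl h)
  · exact (adj_liftContract_iff hw hw').mp h

section Split

variable {z : β} {n : ℕ} {e : H.induce (H.connectedComponentMk z).supp ≃g pathGraph n}
  {l i j : Fin n}

lemma apply_symm_ne_none (hz : φ z = none) (hi : (e.symm i : β) = z) {k : Fin n} (hk : k ≠ i) :
    φ (e.symm k) ≠ none :=
  apply_ne_none_of_ne hz fun h => hk (e.symm.injective (Subtype.ext (h.trans hi.symm)))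

lemma adj_left_or_adj_right_liftContract_iff (hz : φ z = none)
    (hli : l.val + 1 = i.val) (hij : i.val + 1 = j.val) (hi : (e.symm i : β) = z)
    {k : Fin n} (hk : k ≠ i) :
    G.Adj u (φ.liftContract (e.symm k)) ∨ G.Adj v (φ.liftContract (e.symm k)) ↔
      k = l ∨ k = j := by
  calc _ ↔ H.Adj (e.symm i) (e.symm k) := by
        rw [hi, adj_iff_adj_liftContract hz (apply_symm_ne_none hz hi hk)]
    _ ↔ _ := by
        rw [← induce_adj, e.symm.map_adj_iff, pathGraph_adj, Fin.ext_iff, Fin.ext_iff]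
        omega

lemma adj_liftContract_symm_iff_of_split (hz : φ z = none)
    (hli : l.val + 1 = i.val) (hij : i.val + 1 = j.val) (hi : (e.symm i : β) = z)
    (hvl : ¬ G.Adj v (φ.liftContract (e.symm l))) (huj : ¬ G.Adj u (φ.liftContract (e.symm j)))
    {k : Fin n} (hk : k ≠ i) :
    (G.Adj u (φ.liftContract (e.symm k)) ↔ k = l) ∧
      (G.Adj v (φ.liftContract (e.symm k)) ↔ k = j) := by
  have hnbr {m} (hm : m ≠ i) := adj_left_or_adj_right_liftContract_iff hz hli hij hi hm
  have hl := (hnbr (m := l) (fun h => by rw [h] at hli; omega)).mpr (.inl rfl)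
  have hj := (hnbr (m := j) (fun h => by rw [h] at hij; omega)).mpr (.inr rfl)
  have hlj : l ≠ j := fun h => by rw [h] at hli; omega
  have hk' := hnbr hk
  grind

theorem exists_pathGraph_embedding_of_split (huv : G.Adj u v) (hz : φ z = none)
    (hli : l.val + 1 = i.val) (hij : i.val + 1 = j.val) (hi : (e.symm i : β) = z)
    (hvl : ¬ G.Adj v (φ.liftContract (e.symm l))) (huj : ¬ G.Adj u (φ.liftContract (e.symm j))) :
    ∃ P : pathGraph (n + 1) ↪g G, ∀ k, P k = v ∨ ∃ m, P k = φ.liftContract (e.symm m) := by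
  let g : Fin n → α := fun k => φ.liftContract (e.symm k)
  have hgi : g i = u := liftContract_of_eq_none (hi.symm ▸ hz)
  have hnbr {k} (hk : k ≠ i) := adj_liftContract_symm_iff_of_split hz hli hij hi hvl huj hk
  have hgadj k m : G.Adj (g k) (g m) ↔ (pathGraph n).Adj k m ∧ s(k, m) ≠ s(i, j) := by
    by_cases hk : k = i <;> by_cases hm : m = i
    · rw [hk, hm]; simp
    · rw [hk, hgi, (hnbr hm).1]
      simp only [pathGraph_adj, ne_eq, Sym2.eq_iff, Fin.ext_iff, true_and] at hm ⊢; omega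
    · rw [hm, hgi, G.adj_comm, (hnbr hk).1]
      simp only [pathGraph_adj, ne_eq, Sym2.eq_iff, Fin.ext_iff, and_true] at hk ⊢; omega
    · rw [adj_liftContract_iff (apply_symm_ne_none hz hi hk) (apply_symm_ne_none hz hi hm),
        ← induce_adj, e.symm.map_adj_iff]
      simp [hk, hm]
  have hvadj k : G.Adj v (g k) ↔ k = i ∨ k = j := by
    by_cases hk : k = i
    · rw [hk, hgi]; simp [huv.symm]
    · exact (hnbr hk).2.trans (by simp [hk])
  refine ⟨pathGraphInsertNth g v hij (liftContract_injective.comp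
    (Subtype.val_injective.comp e.symm.injective)) (fun _ => liftContract_ne_right huv.ne _)
    hgadj hvadj, fun k => ?_⟩
  change Fin.insertNth (α := fun _ => α) j.castSucc v g k = v ∨
    ∃ m, Fin.insertNth (α := fun _ => α) j.castSucc v g k = g m
  induction k using Fin.succAboveCases j.castSucc
  · exact .inl (Fin.insertNth_apply_same _ _ _)
  · exact .inr ⟨_, Fin.insertNth_apply_succAbove _ _ _ _⟩

end Split

end Embedding

open SimpleGraph.Embedding

variable {u v : α} {φ : H ↪g G.contract u v}

theorem nonempty_embedding_of_forall_ne_none (hφ : ∀ w, φ w ≠ none) : Nonempty (H ↪g G) :=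
  ⟨(φ.liftContractInduce Set.univ fun w _ => hφ w).comp H.induceUnivIso.symm.toEmbedding⟩

theorem nonempty_embedding_of_forall_adj (huv : u ≠ v) {z : β} (hz : φ z = none) {t : α}
    (ht : t = u ∨ t = v) (hzt : ∀ w, H.Adj z w → G.Adj t (φ.liftContract w)) :
    Nonempty (H ↪g G) := by
  have hs : ∀ w ∈ ({z}ᶜ : Set β), φ w ≠ none := fun w hw => apply_ne_none_of_ne hz hw
  refine nonempty_embedding_of_induce_compl_singleton (φ.liftContractInduce {z}ᶜ hs)
    (fun w => ?_) (fun w => ⟨fun h => ?_, hzt w⟩)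
  · change φ.liftContract w ≠ t
    rcases ht with rfl | rfl
    · exact fun h => w.2 (liftContract_injective (h.trans (liftContract_of_eq_none hz).symm))
    · exact liftContract_ne_right huv _
  · rw [adj_iff_adj_liftContract hz (hs w w.2)]
    rcases ht with rfl | rfl
    exacts [.inl h, .inr h]

theorem nonempty_embedding_of_split (huv : G.Adj u v) {z : β} (hz : φ z = none) {n : ℕ}
    {e : H.induce (H.connectedComponentMk z).supp ≃g pathGraph n} {l i j : Fin n}
    (hli : l.val + 1 = i.val) (hij : i.val + 1 = j.val) (hi : (e.symm i : β) = z)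
    (hvl : ¬ G.Adj v (φ.liftContract (e.symm l))) (huj : ¬ G.Adj u (φ.liftContract (e.symm j))) :
    Nonempty (H ↪g G) := by
  let C := H.connectedComponentMk z
  obtain ⟨P, hP⟩ := exists_pathGraph_embedding_of_split huv hz hli hij hi hvl huj
  have hs : ∀ w ∉ C.supp, φ w ≠ none :=
    fun w hw => apply_ne_none_of_ne hz (by rintro rfl; exact hw rfl)
  refine nonempty_embedding_of_induce_compl
    (fun x hx y hy hxy => hy (C.mem_supp_of_adj_mem_supp hx hxy))
    ((e.toEmbedding.trans (pathGraph.castSuccEmb n)).trans P) (φ.liftContractInduce _ hs)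
    (fun x ⟨y, hy⟩ => ?_)
  have hzy : ¬ H.Adj z y := fun h => hy (C.mem_supp_of_adj_mem_supp rfl h)
  change P (e x).castSucc ≠ φ.liftContract y ∧ ¬ G.Adj (P (e x).castSucc) (φ.liftContract y)
  rcases hP (e x).castSucc with h | ⟨m, h⟩ <;> rw [h]
  · exact ⟨(liftContract_ne_right huv.ne y).symm,
      fun h' => hzy ((adj_iff_adj_liftContract hz (hs y hy)).mpr (.inr h'))⟩
  · have hm : (e.symm m : β) ∈ C.supp := (e.symm m).2
    exact ⟨fun h' => hy (liftContract_injective h' ▸ hm),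
      fun h' => hy (C.mem_supp_of_adj_mem_supp hm (adj_of_adj_liftContract (hs y hy) h'))⟩

end SimpleGraph

theorem stmt0 {α β : Type*} [Fintype β] (H : SimpleGraph β) (hH : IsLinearForest H)
    (G : SimpleGraph α) (hG : G.FreeInduced H) (u v : α) (huv : G.Adj u v) :
    (G.contract u v).FreeInduced H := by
  refine ⟨fun φ => ?_⟩
  suffices Nonempty (H ↪g G) from hG.false this.some
  by_cases hnone : ∀ w, φ w ≠ none
  · exact nonempty_embedding_of_forall_ne_none hnone
  push Not at hnone
  obtain ⟨z, hz⟩ := hnone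
  by_cases hu : ∀ w, H.Adj z w → G.Adj u (φ.liftContract w)
  · exact nonempty_embedding_of_forall_adj huv.ne hz (.inl rfl) hu
  by_cases hv : ∀ w, H.Adj z w → G.Adj v (φ.liftContract w)
  · exact nonempty_embedding_of_forall_adj huv.ne hz (.inr rfl) hv
  push Not at hu hv
  obtain ⟨a, hza, hua⟩ := hu
  obtain ⟨b, hzb, hvb⟩ := hv
  have hab : a ≠ b := by
    rintro rfl
    have := (Embedding.adj_iff_adj_liftContract hz (Embedding.apply_ne_none_of_ne hz hza.ne')).mp
      hza
    tauto
  obtain ⟨n, e, l, i, j, hli, hij, hl, hi, hj⟩ :=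
    exists_iso_pathGraph_of_adj_of_adj (hH _) hza hzb hab
  exact nonempty_embedding_of_split huv hz hli hij hi (hl ▸ hvb) (hj ▸ hua)
end

section
/- Let G and J be graphs and let C be a finite set of connected induced subgraphs of G. Define the blob graph H = H(G, C) with vertex set {v_C : C ∈ C}, where v_C and v_{C'} are adjacent if and only if the vertex sets of C and C' intersect or there is an edge of G between them. If (i) G is J-free, (ii) J has no true twins, and (iii) the class of J-free graphs is closed under edge contraction, then H is J-free. -/
open SimpleGraph

/-- `G` contains no induced subgraph isomorphic to `H`. -/
def SimpleGraph.IndFree {α β : Type*} (G : SimpleGraph α) (H : SimpleGraph β) : Prop :=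
  IsEmpty (H ↪g G)

/-!
Pick an embedding of `J` into the blob graph and shrink the chosen blobs to finite connected
sets with the same touching pattern. Giving each blob its own copy of its vertices yields a graph
`B` in which the blobs become pairwise disjoint connected sets whose adjacency pattern is `J`;
copies of one vertex are true twins, and `J` has none, so `B` is still `J`-free. Contracting
the edges inside the blobs one at a time keeps the graph `J`-free and ends with `J` as an induced
subgraph.
-/

namespace SimpleGraph

open Function

variable {V W β : Type*} {G : SimpleGraph V} {J : SimpleGraph β}

theorem IndFree.of_embedding {G' : SimpleGraph W} (f : G ↪g G') (h : G'.IndFree J) :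
    G.IndFree J :=
  ⟨fun g => h.false (f.comp g)⟩

theorem Connected.induce_image {G' : SimpleGraph W} {f : V → W}
    (hf : ∀ ⦃x y⦄, G.Adj x y → f x ≠ f y → G'.Adj (f x) (f y)) {s : Set V}
    (hs : (G.induce s).Connected) : (G'.induce (f '' s)).Connected := by
  obtain ⟨⟨x, hx⟩⟩ := hs.nonempty
  refine (connected_iff _).mpr ⟨?_, ⟨⟨f x, x, hx, rfl⟩⟩⟩
  rintro ⟨_, y, hy, rfl⟩ ⟨_, z, hz, rfl⟩
  have hyz := (reachable_iff_reflTransGen _ _).mp (hs.preconnected ⟨y, hy⟩ ⟨z, hz⟩)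
  let g : s → f '' s := fun a => ⟨f a, a, a.2, rfl⟩
  refine (reachable_iff_reflTransGen _ _).mpr (Relation.ReflTransGen.lift' g ?_ _ _ hyz)
  intro a a' haa'
  by_cases h : f a = f a'
  · rw [onFun, show g a = g a' from Subtype.ext h]
  · exact .single (hf haa' h)

theorem exists_adj_of_connected_induce {s : Set V} (hs : (G.induce s).Connected)
    (hnt : s.Nontrivial) : ∃ x ∈ s, ∃ y ∈ s, G.Adj x y := by
  have := hnt.coe_sort
  obtain ⟨⟨x, hx⟩⟩ := hs.nonempty
  obtain ⟨⟨y, hy⟩, hxy⟩ := hs.preconnected.exists_adj_of_nontrivial ⟨x, hx⟩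
  exact ⟨x, hx, y, hy, hxy⟩

theorem exists_finite_connected_between {s t : Set V} (hs : (G.induce s).Connected)
    (ht : t.Finite) (hts : t ⊆ s) :
    ∃ d, t ⊆ d ∧ d ⊆ s ∧ d.Finite ∧ (G.induce d).Connected := by
  classical
  obtain ⟨p⟩ := hs.nonempty
  have htfin : (Subtype.val ⁻¹' t : Set s).Finite := ht.preimage Subtype.val_injective.injOn
  obtain ⟨t', ht', hconn⟩ :=
    extend_finset_to_connected hs.preconnected (Finset.insert_nonempty p htfin.toFinset)
  refine ⟨Subtype.val '' (t' : Set s), fun x hx => ⟨⟨x, hts hx⟩, ht' ?_, rfl⟩,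
    Subtype.coe_image_subset _ _, t'.finite_toSet.image _,
    hconn.induce_image (f := Subtype.val) fun _ _ h _ => h⟩
  exact Finset.mem_insert_of_mem (htfin.mem_toFinset.mpr hx)

def Touches (G : SimpleGraph V) (X Y : Set V) : Prop :=
  ∃ x ∈ X, ∃ y ∈ Y, x = y ∨ G.Adj x y

theorem Touches.mono {X X' Y Y' : Set V} (hX : X ⊆ X') (hY : Y ⊆ Y') (h : G.Touches X Y) :
    G.Touches X' Y' :=
  let ⟨x, hx, y, hy, hxy⟩ := h
  ⟨x, hX hx, y, hY hy, hxy⟩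

theorem blob_adj_iff {𝒞 : Set (Set V)} {C C' : 𝒞} :
    (blob G 𝒞).Adj C C' ↔ C ≠ C' ∧ G.Touches C C' := by
  simp only [blob, Touches, Set.Nonempty, Set.mem_inter_iff]
  aesop

theorem exists_finite_connected_subset_touches [Finite β] {C : β → Set V}
    (hC : ∀ b, (G.induce (C b)).Connected) :
    ∃ D : β → Set V, (∀ b, D b ⊆ C b) ∧ (∀ b, (D b).Finite) ∧
      (∀ b, (G.induce (D b)).Connected) ∧
      ∀ b b', G.Touches (C b) (C b') → G.Touches (D b) (D b') := by
  have hwit : ∀ b b', ∃ x ∈ C b, ∃ y ∈ C b', G.Touches (C b) (C b') → x = y ∨ G.Adj x y := by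
    intro b b'
    by_cases h : G.Touches (C b) (C b')
    · obtain ⟨x, hx, y, hy, hxy⟩ := h
      exact ⟨x, hx, y, hy, fun _ => hxy⟩
    · obtain ⟨⟨x, hx⟩⟩ := (hC b).nonempty
      obtain ⟨⟨y, hy⟩⟩ := (hC b').nonempty
      exact ⟨x, hx, y, hy, fun h' => absurd h' h⟩
  choose x hx y hy hxy using hwit
  have hull : ∀ b, ∃ d, Set.range (x b) ∪ Set.range (y · b) ⊆ d ∧ d ⊆ C b ∧ d.Finite ∧
      (G.induce d).Connected := fun b =>
    exists_finite_connected_between (hC b) ((Set.finite_range _).union (Set.finite_range _))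
      (Set.union_subset (Set.range_subset_iff.mpr (hx b)) (Set.range_subset_iff.mpr (hy · b)))
  choose D hSD hDC hDfin hDconn using hull
  refine ⟨D, hDC, hDfin, hDconn, fun b b' h => ⟨x b b', ?_, y b b', ?_, hxy b b' h⟩⟩
  · exact hSD b (Or.inl ⟨b', rfl⟩)
  · exact hSD b' (Or.inr ⟨b, rfl⟩)

open Classical in
noncomputable def contractMap (u v : V) (x : V) : Option {x : V // x ≠ u ∧ x ≠ v} :=
  if h : x ≠ u ∧ x ≠ v then some ⟨x, h⟩ else none

section contractMap

variable {u v x y : V}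

@[simp]
theorem contractMap_eq_none_iff : contractMap u v x = none ↔ x = u ∨ x = v := by
  unfold contractMap
  split_ifs with h <;> simp only [false_iff] <;> tauto

@[simp]
theorem contractMap_eq_some_iff {t : {x : V // x ≠ u ∧ x ≠ v}} :
    contractMap u v x = some t ↔ x = t := by
  unfold contractMap
  split_ifs with h
  · simp [Subtype.ext_iff, eq_comm]
  · simp only [false_iff]
    rintro rfl
    exact h t.2

theorem contractMap_eq_contractMap_iff :
    contractMap u v x = contractMap u v y ↔ x = y ∨ (x = u ∨ x = v) ∧ (y = u ∨ y = v) := by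
  rcases h : contractMap u v y with _ | t
  · rw [contractMap_eq_none_iff] at h ⊢
    rcases h with rfl | rfl <;> tauto
  · rw [contractMap_eq_some_iff] at h ⊢
    subst h
    have := t.2
    tauto

theorem contract_eq_map (G : SimpleGraph V) (u v : V) :
    G.contract u v = G.map (contractMap u v) := by
  ext (_ | s) (_ | t) <;>
    simp [contract, map_adj', Subtype.ext_iff, and_or_left, exists_or, adj_comm]
  exact Adj.ne

end contractMap

structure IsInducedMinorModel (H : SimpleGraph V) (J : SimpleGraph β) (E : β → Set V) :
    Prop where
  finite : ∀ b, (E b).Finite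
  connected : ∀ b, (H.induce (E b)).Connected
  pairwise_disjoint : Pairwise (Disjoint on E)
  adj_iff : ∀ ⦃b b'⦄, b ≠ b' → (J.Adj b b' ↔ ∃ x ∈ E b, ∃ y ∈ E b', H.Adj x y)

namespace IsInducedMinorModel

variable {H : SimpleGraph V} {E : β → Set V}

theorem eq_of_mem (hE : H.IsInducedMinorModel J E) {b b' : β} {x : V} (hb : x ∈ E b)
    (hb' : x ∈ E b') : b = b' := by
  by_contra h
  exact Set.disjoint_left.mp (hE.pairwise_disjoint h) hb hb'

theorem nonempty_embedding (hE : H.IsInducedMinorModel J E) (hsub : ∀ b, (E b).Subsingleton) :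
    Nonempty (J ↪g H) := by
  have hmem : ∀ b, ∃ x, x ∈ E b := fun b =>
    let ⟨⟨x, hx⟩⟩ := (hE.connected b).nonempty
    ⟨x, hx⟩
  choose x hx using hmem
  have hE_eq : ∀ b, E b = {x b} := fun b => (hsub b).eq_singleton_of_mem (hx b)
  refine ⟨⟨⟨x, fun b b' h => hE.eq_of_mem (hx b) (h ▸ hx b')⟩, fun {b b'} => ?_⟩⟩
  change H.Adj (x b) (x b') ↔ J.Adj b b'
  rcases eq_or_ne b b' with rfl | h
  · simp
  · simp [hE.adj_iff h, hE_eq]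

theorem map (hE : H.IsInducedMinorModel J E) (f : V → W)
    (hsat : ∀ b, ∀ x ∈ E b, ∀ y, f y = f x → y ∈ E b) :
    (H.map f).IsInducedMinorModel J (fun b => f '' E b) := by
  have hsep : ∀ ⦃b b'⦄, b ≠ b' → ∀ x ∈ E b, ∀ y ∈ E b', f x ≠ f y := fun b b' h x hx y hy hxy =>
    h (hE.eq_of_mem hx (hsat b' y hy x hxy))
  refine ⟨fun b => (hE.finite b).image f, fun b => ?_, fun b b' h => ?_, fun b b' h => ?_⟩
  · exact (hE.connected b).induce_image (G' := H.map f) fun x y hxy hne =>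
      ⟨hne, x, y, hxy, rfl, rfl⟩
  · exact Set.disjoint_left.mpr fun _ ⟨x, hx, hfx⟩ ⟨y, hy, hfy⟩ =>
      hsep h x hx y hy (hfx.trans hfy.symm)
  · rw [hE.adj_iff h]
    constructor
    · rintro ⟨x, hx, y, hy, hxy⟩
      exact ⟨f x, ⟨x, hx, rfl⟩, f y, ⟨y, hy, rfl⟩, hsep h x hx y hy, x, y, hxy, rfl, rfl⟩
    · rintro ⟨_, ⟨x, hx, rfl⟩, _, ⟨y, hy, rfl⟩, -, x', y', hxy', hx', hy'⟩
      exact ⟨x', hsat b x hx x' hx', y', hsat b' y hy y' hy', hxy'⟩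

theorem contract (hE : H.IsInducedMinorModel J E) {b : β} {u v : V} (hu : u ∈ E b)
    (hv : v ∈ E b) :
    (H.contract u v).IsInducedMinorModel J (fun b' => contractMap u v '' E b') := by
  rw [contract_eq_map]
  refine hE.map _ fun b' x hx y hyx => ?_
  rcases contractMap_eq_contractMap_iff.mp hyx with rfl | ⟨hy, hx'⟩
  · exact hx
  · have hb : b' = b := hE.eq_of_mem hx (by rcases hx' with rfl | rfl <;> assumption)
    subst hb
    rcases hy with rfl | rfl <;> assumption

universe u

theorem not_indFree [Finite β] {V : Type u} {H : SimpleGraph V} {E : β → Set V}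
    (hcontract : ∀ {γ : Type u} (G' : SimpleGraph γ) (x y : γ), G'.Adj x y →
      G'.IndFree J → (G'.contract x y).IndFree J)
    (hE : H.IsInducedMinorModel J E) : ¬ H.IndFree J := by
  induction hn : (⋃ b, E b).ncard using Nat.strong_induction_on generalizing V with
  | _ n ih =>
  by_cases hsub : ∀ b, (E b).Subsingleton
  · exact fun hH => hH.false (hE.nonempty_embedding hsub).some
  push Not at hsub
  obtain ⟨b, hb⟩ := hsub
  obtain ⟨u, hu, v, hv, huv⟩ := exists_adj_of_connected_induce (hE.connected b) hb
  have hfin : (⋃ b, E b).Finite := Set.finite_iUnion hE.finite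
  -- contracting `uv` merges two vertices of the union of the branch sets
  have hlt : (⋃ b', contractMap u v '' E b').ncard < n := by
    rw [← Set.image_iUnion, ← hn]
    refine (Set.ncard_image_le hfin).lt_of_ne fun h => huv.ne ?_
    exact (Set.ncard_image_iff hfin).mp h (Set.mem_iUnion_of_mem b hu)
      (Set.mem_iUnion_of_mem b hv) (contractMap_eq_contractMap_iff.mpr (.inr ⟨.inl rfl, .inr rfl⟩))
  exact fun hH => ih _ hlt (hE.contract hu hv) rfl (hcontract H u v huv hH)

theorem not_indFree_of_small [Finite β] [Small.{u} V]
    (hcontract : ∀ {γ : Type u} (G' : SimpleGraph γ) (x y : γ), G'.Adj x y →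
      G'.IndFree J → (G'.contract x y).IndFree J)
    (hE : H.IsInducedMinorModel J E) : ¬ H.IndFree J := fun hH =>
  let e := equivShrink.{u} V
  (hE.map e fun _ _ hx _ hyx => e.injective hyx ▸ hx).not_indFree hcontract
    (hH.of_embedding (Iso.map e H).symm.toEmbedding)

end IsInducedMinorModel

/-- Every member `D b` gets its own copy `⟨b, x⟩` of each of its vertices `x`; copies of the same
vertex are adjacent true twins. -/
def blowup (G : SimpleGraph V) (D : β → Set V) : SimpleGraph (Σ b, D b) where
  Adj p q := p ≠ q ∧ ((p.2 : V) = q.2 ∨ G.Adj p.2 q.2)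
  symm := ⟨fun _ _ ⟨hne, h⟩ => ⟨hne.symm, h.imp Eq.symm Adj.symm⟩⟩
  loopless := ⟨fun _ h => h.1 rfl⟩

variable {D : β → Set V}

theorem blowup_adj {p q : Σ b, D b} :
    (blowup G D).Adj p q ↔ p ≠ q ∧ ((p.2 : V) = q.2 ∨ G.Adj p.2 q.2) :=
  Iff.rfl

theorem blowup_indFree (hG : G.IndFree J) (htwins : ∀ x y : β, ¬ J.TrueTwins x y) :
    (blowup G D).IndFree J := by
  refine ⟨fun g => ?_⟩
  let pt : β → V := fun b => (g b).2
  have hadj : ∀ {b b'}, b ≠ b' → (J.Adj b b' ↔ pt b = pt b' ∨ G.Adj (pt b) (pt b')) :=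
    fun h => by rw [← g.map_adj_iff, blowup_adj, and_iff_right (g.injective.ne h)]
  by_cases hinj : Injective pt
  · refine hG.false ⟨⟨pt, hinj⟩, fun {b b'} => ?_⟩
    rcases eq_or_ne b b' with rfl | h
    · simp
    · exact ((hadj h).trans (or_iff_right (hinj.ne h))).symm
  · obtain ⟨b, b', heq, hne⟩ := not_injective_iff.mp hinj
    refine htwins b b' ⟨(hadj hne).mpr (.inl heq), fun w hwb hwb' => ?_⟩
    rw [hadj hwb.symm, hadj hwb'.symm, heq]

theorem isInducedMinorModel_blowup (hD : ∀ b, (D b).Finite)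
    (hconn : ∀ b, (G.induce (D b)).Connected)
    (hJ : ∀ ⦃b b'⦄, b ≠ b' → (J.Adj b b' ↔ G.Touches (D b) (D b'))) :
    (blowup G D).IsInducedMinorModel J (fun b => Set.range (Sigma.mk b)) := by
  refine ⟨fun b => ?_, fun b => ?_, fun b b' h => ?_, fun b b' h => ?_⟩
  · have := (hD b).to_subtype
    exact Set.finite_range _
  · refine (hconn b).map ⟨fun x => ⟨⟨b, x⟩, x, rfl⟩, fun h => ⟨?_, .inr h⟩⟩ ?_
    · simpa [Subtype.ext_iff] using h.ne
    · rintro ⟨_, x, rfl⟩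
      exact ⟨x, rfl⟩
  · exact Set.disjoint_left.mpr fun _ ⟨_, hx⟩ ⟨_, hy⟩ => h (congrArg Sigma.fst (hx.trans hy.symm))
  · rw [hJ h]
    constructor
    · rintro ⟨x, hx, y, hy, hxy⟩
      exact ⟨⟨b, x, hx⟩, ⟨_, rfl⟩, ⟨b', y, hy⟩, ⟨_, rfl⟩, fun e => h (congrArg Sigma.fst e), hxy⟩
    · rintro ⟨_, ⟨x, rfl⟩, _, ⟨y, rfl⟩, -, hxy⟩
      exact ⟨x, x.2, y, y.2, hxy⟩

end SimpleGraph

theorem stmt3 {α β : Type*} (G : SimpleGraph α) (J : SimpleGraph β)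
    (𝒞 : Set (Set α)) (h𝒞fin : 𝒞.Finite)
    (hconn : ∀ C ∈ 𝒞, (G.induce C).Connected)
    (hGJ : G.IndFree J)
    (htwins : ∀ x y : β, ¬ J.TrueTwins x y)
    (hcontract : ∀ {γ : Type*} (G' : SimpleGraph γ) (x y : γ), G'.Adj x y →
      G'.IndFree J → (G'.contract x y).IndFree J) :
    (blob G 𝒞).IndFree J := by
  refine ⟨fun f => ?_⟩
  have : Finite 𝒞 := h𝒞fin.to_subtype
  have : Finite β := .of_injective f f.injective
  obtain ⟨D, hDC, hDfin, hDconn, hDtouch⟩ :=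
    exists_finite_connected_subset_touches (C := fun b => (f b : Set α)) fun b => hconn _ (f b).2
  have : ∀ b, Finite (D b) := fun b => (hDfin b).to_subtype
  have hJ : ∀ ⦃b b'⦄, b ≠ b' → (J.Adj b b' ↔ G.Touches (D b) (D b')) := fun b b' h => by
    rw [← f.map_adj_iff, blob_adj_iff, and_iff_right (f.injective.ne h)]
    exact ⟨hDtouch b b', Touches.mono (hDC b) (hDC b')⟩
  exact (isInducedMinorModel_blowup hDfin hDconn hJ).not_indFree_of_small hcontract
    (blowup_indFree hGJ htwins)
end
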